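/- Let s > 0 and let u : ℝ → ℝ be twice differentiable on [0, s] and satisfy the dynamical free boundary problem u''(x) = −1 − u(x) − (u'(x))² on (0, s), with u(0) = 0, u(s) = 1, and u'(s) = 0. The initial velocity satisfies (u'(0))² = (3/2)e² − 1/2. -/

import Mathlib

/-!
Multiplying the equation `u'' + (u')² + u + 1 = 0` by `2u' e^{2u}` exhibits it as
`(((u')² + u + 1/2) e^{2u})' = 0`, so this energy takes the same value at `0` and at `s`.
At `0` it is `(u'(0))² + 1/2`, at `s` it is `(3/2) e²`.
-/

open Real Set

noncomputable def freeBoundaryEnergy (u : ℝ → ℝ) (x : ℝ) : ℝ :=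
  ((deriv u x) ^ 2 + u x + 1 / 2) * exp (2 * u x)

theorem hasDerivAt_freeBoundaryEnergy {u : ℝ → ℝ} {x : ℝ} (hu : DifferentiableAt ℝ u x)
    (hu' : DifferentiableAt ℝ (deriv u) x) :
    HasDerivAt (freeBoundaryEnergy u)
      (2 * deriv u x * (deriv (deriv u) x + 1 + u x + (deriv u x) ^ 2) * exp (2 * u x)) x := by
  have hpoly : HasDerivAt (fun y => (deriv u y) ^ 2 + u y + 1 / 2)
      (2 * deriv u x * deriv (deriv u) x + deriv u x) x := by
    simpa [mul_comm] using ((hu'.hasDerivAt.pow 2).add hu.hasDerivAt).add_const (1 / 2)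
  have hexp : HasDerivAt (fun y => exp (2 * u y)) (exp (2 * u x) * (2 * deriv u x)) x :=
    (hasDerivAt_exp _).comp x (hu.hasDerivAt.const_mul 2)
  exact (hpoly.mul hexp).congr_deriv (by ring)

theorem freeBoundaryEnergy_eq_of_ode {u : ℝ → ℝ} {a b : ℝ} (hab : a < b)
    (hdiff : ∀ x ∈ Icc a b, DifferentiableAt ℝ u x ∧ DifferentiableAt ℝ (deriv u) x)
    (hode : ∀ x ∈ Ioo a b, deriv (deriv u) x = -1 - u x - (deriv u x) ^ 2) :
    freeBoundaryEnergy u a = freeBoundaryEnergy u b := by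
  have hcont : ContinuousOn (freeBoundaryEnergy u) (Icc a b) := fun x hx =>
    (hasDerivAt_freeBoundaryEnergy (hdiff x hx).1 (hdiff x hx).2).continuousAt.continuousWithinAt
  have hderiv : ∀ x ∈ Ioo a b, HasDerivAt (freeBoundaryEnergy u) 0 x := by
    intro x hx
    obtain ⟨hu, hu'⟩ := hdiff x (Ioo_subset_Icc_self hx)
    convert hasDerivAt_freeBoundaryEnergy hu hu' using 1
    rw [hode x hx]
    ring
  obtain ⟨c, -, hc⟩ := exists_hasDerivAt_eq_slope _ (fun _ => (0 : ℝ)) hab hcont hderiv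
  rw [eq_comm, div_eq_zero_iff, sub_eq_zero, sub_eq_zero] at hc
  exact hc.resolve_right hab.ne' |>.symm

/-- Initial velocity for the dynamical free boundary problem: if `u` is twice
differentiable on `[0, s]` and satisfies `u'' = -1 - u - (u')²` on `(0, s)`,
with `u(0) = 0`, `u(s) = 1` and `u'(s) = 0`, then
`(u'(0))² = (3/2) e² - 1/2`. -/
theorem dynamical_problem_initial_velocity
    (s : ℝ) (hs : 0 < s) (u : ℝ → ℝ)
    (hdiff : ∀ x ∈ Set.Icc (0 : ℝ) s,
      DifferentiableAt ℝ u x ∧ DifferentiableAt ℝ (deriv u) x)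
    (hode : ∀ x ∈ Set.Ioo (0 : ℝ) s,
      deriv (deriv u) x = -1 - u x - (deriv u x) ^ 2)
    (h0 : u 0 = 0) (hs1 : u s = 1) (hs2 : deriv u s = 0) :
    (deriv u 0) ^ 2 = 3 / 2 * Real.exp 2 - 1 / 2 := by
  have henergy := freeBoundaryEnergy_eq_of_ode hs hdiff hode
  simp only [freeBoundaryEnergy, h0, hs1, hs2] at henergy
  norm_num at henergy
  linarith
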